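/- arXiv:2305.12475 — 9 statements merged into one kernel-verified Lean document; each statement's English description precedes it below -/
import Mathlib

section
/- For any real number η > 0, smoothness constant ℓ > 0 with ηℓ ≥ 5 (so that τ := ⌈(ηℓ)² − 1⌉ ≥ 1), the product ∏_{t=0}^{τ−1} (1 + ℓ²η²/(t+1)) is at most (1/√(2πτ)) · (4e)^τ. -/
/-! Each factor satisfies `1 + a/(t+1) ≤ (τ + a)/(t+1)`, so the product is at most `(τ + a)^τ / τ!`,
and Stirling's lower bound `τ! ≥ √(2πτ) (τ/e)^τ` turns this into `((τ + a) e / τ)^τ / √(2πτ)`.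
Since `a = (ηℓ)² ≤ τ + 1 ≤ 3τ`, the base is at most `4e`. -/

open Finset Real
open scoped Nat

lemma prod_one_add_div_le_pow_div_factorial {a : ℝ} (ha : 0 ≤ a) (n : ℕ) :
    ∏ t ∈ range n, (1 + a / ((t : ℝ) + 1)) ≤ (n + a) ^ n / n ! := by
  have hfactor : ∀ t ∈ range n, 1 + a / ((t : ℝ) + 1) ≤ (n + a) / ((t : ℝ) + 1) := by
    intro t ht
    have htn : (t : ℝ) + 1 ≤ n := by exact_mod_cast mem_range.mp ht
    rw [one_add_div (by positivity)]
    gcongr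
  calc ∏ t ∈ range n, (1 + a / ((t : ℝ) + 1))
      ≤ ∏ t ∈ range n, ((n + a) / ((t : ℝ) + 1)) :=
        prod_le_prod (fun _ _ => by positivity) hfactor
    _ = (n + a) ^ n / n ! := by
        rw [prod_div_distrib, prod_const, card_range, ← prod_range_add_one_eq_factorial]
        push_cast
        rfl

lemma pow_div_factorial_le_stirling {c : ℝ} (hc : 0 ≤ c) {n : ℕ} (hn : n ≠ 0) :
    c ^ n / n ! ≤ 1 / √(2 * π * n) * (c * exp 1 / n) ^ n := by
  calc c ^ n / n ! ≤ c ^ n / (√(2 * π * n) * (n / exp 1) ^ n) :=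
        div_le_div_of_nonneg_left (by positivity) (by positivity) (Stirling.le_factorial_stirling n)
    _ = 1 / √(2 * π * n) * (c * exp 1 / n) ^ n := by
        rw [div_pow, div_pow, mul_pow]
        field_simp

theorem stmt_0_general (η ℓ : ℝ) (h : 5 ≤ η * ℓ)
    (τ : ℕ) (hτ : τ = ⌈(η * ℓ) ^ 2 - 1⌉₊) :
    ∏ t ∈ Finset.range τ, (1 + ℓ ^ 2 * η ^ 2 / ((t : ℝ) + 1)) ≤
      (1 / Real.sqrt (2 * Real.pi * τ)) * (4 * Real.exp 1) ^ τ := by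
  set a := ℓ ^ 2 * η ^ 2
  have ha : a = (η * ℓ) ^ 2 := by ring
  have hτ_pos : 0 < τ := hτ ▸ Nat.ceil_pos.mpr (by nlinarith)
  have haτ : a ≤ τ + 1 := by
    have := hτ ▸ Nat.le_ceil ((η * ℓ) ^ 2 - 1)
    linarith
  have hτ_one : (1 : ℝ) ≤ τ := by exact_mod_cast hτ_pos
  calc ∏ t ∈ range τ, (1 + a / ((t : ℝ) + 1))
      ≤ (τ + a) ^ τ / τ ! := prod_one_add_div_le_pow_div_factorial (by positivity) τ
    _ ≤ 1 / √(2 * π * τ) * ((τ + a) * exp 1 / τ) ^ τ :=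
        pow_div_factorial_le_stirling (by positivity) hτ_pos.ne'
    _ ≤ 1 / √(2 * π * τ) * (4 * exp 1) ^ τ := by
        gcongr
        rw [div_le_iff₀ (by positivity)]
        nlinarith [exp_pos 1]

theorem stmt_0 (η ℓ : ℝ) (hη : 0 < η) (hℓ : 0 < ℓ) (h : 5 ≤ η * ℓ)
    (τ : ℕ) (hτ : τ = ⌈(η * ℓ) ^ 2 - 1⌉₊) :
    ∏ t ∈ Finset.range τ, (1 + ℓ ^ 2 * η ^ 2 / ((t : ℝ) + 1)) ≤
      (1 / Real.sqrt (2 * Real.pi * τ)) * (4 * Real.exp 1) ^ τ :=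
  stmt_0_general η ℓ h τ hτ
end

section
/- Consider gradient descent on f(x) = (ℓ/2)x² on ℝ with stepsize η_t = η/√(t+1) starting from x_0 > 0, where ηℓ ≥ 5. Then for every t with 1 ≤ t ≤ ⌊η²ℓ²/16 − 1⌋, the iterate satisfies x_t² ≥ (1/(3√t)) (8e)^t x_0². -/
/-!
Write `a = ηℓ`. As long as `16 (k + 1) ≤ a²`, the step factor `c = a / √(k + 1)` satisfies
`c² ≥ 16`, hence `(1 - c)² ≥ c² / 2`, so each step multiplies `x²` by at least `a² / (2 (k + 1))`.
Iterating gives `x_t² ≥ (a² / 2)^t / t! · x_0²`, and the upper Stirling bound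
`t! ≤ 3 √t (t / e)^t` together with `a² / 2 ≥ 8 t` turns this into `(8 e)^t / (3 √t) · x_0²`.
-/

open Real Stirling Nat

lemma stirlingSeq_le_stirlingSeq_one {n : ℕ} (hn : n ≠ 0) : stirlingSeq n ≤ stirlingSeq 1 := by
  obtain ⟨m, rfl⟩ := exists_eq_succ_of_ne_zero hn
  exact stirlingSeq'_antitone (Nat.zero_le m)

lemma factorial_le_three_mul_sqrt_mul_pow {n : ℕ} (hn : n ≠ 0) :
    (n ! : ℝ) ≤ 3 * √n * (n / exp 1) ^ n := by
  have hfac : (n ! : ℝ) = stirlingSeq n * (√(2 * n) * (n / exp 1) ^ n) := by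
    rw [stirlingSeq, div_mul_cancel₀]
    positivity
  have hconst : stirlingSeq 1 * √(2 * n) ≤ 3 * √n := by
    rw [stirlingSeq_one, sqrt_mul zero_le_two, ← mul_assoc, div_mul_cancel₀ _ (by positivity)]
    gcongr
    exact exp_one_lt_d9.le.trans (by norm_num)
  calc (n ! : ℝ) ≤ stirlingSeq 1 * (√(2 * n) * (n / exp 1) ^ n) := by
        rw [hfac]
        gcongr
        exact stirlingSeq_le_stirlingSeq_one hn
    _ ≤ 3 * √n * (n / exp 1) ^ n := by
        rw [← mul_assoc]
        gcongr

lemma one_div_mul_pow_le_pow_div_factorial {a : ℝ} {n : ℕ} (hn : n ≠ 0)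
    (hna : 16 * (n : ℝ) ≤ a ^ 2) :
    1 / (3 * √n) * (8 * exp 1) ^ n ≤ (a ^ 2 / 2) ^ n / n ! := by
  have hn' : (0 : ℝ) < n := by positivity
  calc 1 / (3 * √n) * (8 * exp 1) ^ n = (8 * n) ^ n / (3 * √n * (n / exp 1) ^ n) := by
        rw [div_pow, mul_pow, mul_pow]
        field_simp
    _ ≤ (8 * n) ^ n / n ! := by
        gcongr
        exact factorial_le_three_mul_sqrt_mul_pow hn
    _ ≤ (a ^ 2 / 2) ^ n / n ! := by
        gcongr
        linarith

lemma sq_div_two_le_one_sub_sq {c : ℝ} (hc : 16 ≤ c ^ 2) : c ^ 2 / 2 ≤ (1 - c) ^ 2 := by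
  nlinarith [abs_nonneg c, sq_abs c, neg_abs_le c]

section Recursion

variable {a : ℝ} {x : ℕ → ℝ} (hx : ∀ t : ℕ, x (t + 1) = (1 - a / √((t : ℝ) + 1)) * x t)
include hx

lemma mul_sq_le_sq_succ {k : ℕ} (hk : 16 * ((k : ℝ) + 1) ≤ a ^ 2) :
    a ^ 2 / (2 * (k + 1)) * x k ^ 2 ≤ x (k + 1) ^ 2 := by
  have hk' : (0 : ℝ) < k + 1 := by positivity
  have hc : (a / √((k : ℝ) + 1)) ^ 2 = a ^ 2 / (k + 1) := by
    rw [div_pow, sq_sqrt hk'.le]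
  have hc16 : 16 ≤ (a / √((k : ℝ) + 1)) ^ 2 := by
    rw [hc, le_div_iff₀ hk']
    linarith
  have hfactor : a ^ 2 / (2 * (k + 1)) = (a / √((k : ℝ) + 1)) ^ 2 / 2 := by
    rw [hc, div_div, mul_comm]
  rw [hx, mul_pow, hfactor]
  gcongr
  exact sq_div_two_le_one_sub_sq hc16

lemma pow_div_factorial_mul_sq_le {t : ℕ} (ht : 16 * (t : ℝ) ≤ a ^ 2) :
    (a ^ 2 / 2) ^ t / t ! * x 0 ^ 2 ≤ x t ^ 2 := by
  induction t with
  | zero => simp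
  | succ k ih =>
    push_cast at ht
    calc (a ^ 2 / 2) ^ (k + 1) / (k + 1)! * x 0 ^ 2
        = a ^ 2 / (2 * (k + 1)) * ((a ^ 2 / 2) ^ k / k ! * x 0 ^ 2) := by
          rw [factorial_succ, pow_succ]
          push_cast
          field_simp
      _ ≤ a ^ 2 / (2 * (k + 1)) * x k ^ 2 := by
          gcongr
          exact ih (by linarith)
      _ ≤ x (k + 1) ^ 2 := mul_sq_le_sq_succ hx ht

end Recursion

theorem stmt_4_general (η ℓ : ℝ)
    (x : ℕ → ℝ)
    (hupd : ∀ t : ℕ, x (t + 1) = (1 - η * ℓ / Real.sqrt ((t : ℝ) + 1)) * x t) :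
    ∀ t : ℕ, 1 ≤ t → t ≤ ⌊η ^ 2 * ℓ ^ 2 / 16 - 1⌋₊ →
      (1 / (3 * Real.sqrt t)) * (8 * Real.exp 1) ^ t * (x 0) ^ 2 ≤ (x t) ^ 2 := by
  intro t ht htN
  have ht0 : t ≠ 0 := one_le_iff_ne_zero.mp ht
  have hta : 16 * (t : ℝ) ≤ (η * ℓ) ^ 2 := by
    have := (le_floor_iff' ht0).mp htN
    linarith [mul_pow η ℓ 2]
  calc 1 / (3 * √t) * (8 * exp 1) ^ t * x 0 ^ 2
      ≤ ((η * ℓ) ^ 2 / 2) ^ t / t ! * x 0 ^ 2 := by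
        gcongr
        exact one_div_mul_pow_le_pow_div_factorial ht0 hta
    _ ≤ x t ^ 2 := pow_div_factorial_mul_sq_le hupd hta

theorem stmt_4 (η ℓ : ℝ) (hη : 0 < η) (hℓ : 0 < ℓ) (h : 5 ≤ η * ℓ)
    (x : ℕ → ℝ) (hx0 : 0 < x 0)
    (hupd : ∀ t : ℕ, x (t + 1) = (1 - η * ℓ / Real.sqrt ((t : ℝ) + 1)) * x t) :
    ∀ t : ℕ, 1 ≤ t → t ≤ ⌊η ^ 2 * ℓ ^ 2 / 16 - 1⌋₊ →
      (1 / (3 * Real.sqrt t)) * (8 * Real.exp 1) ^ t * (x 0) ^ 2 ≤ (x t) ^ 2 :=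
  stmt_4_general η ℓ x hupd
end

section
/- Let f(x) = (L/2)x² on ℝ with 0 < L. Suppose at point x_t the stochastic gradient is g = (1+δ)∇f(x_t) or g = (1−δ)∇f(x_t), each with probability 1/2, where δ > 1, and the normalized SGD update is x_{t+1} = x_t − γ_t g/|g| for some γ_t > 0. Then E[|∇f(x_{t+1})| | x_t] = (L/2)(|x_t − γ_t| + |x_t + γ_t|) ≥ L|x_t| = |∇f(x_t)|. -/
/-! Since `δ > 1`, the two stochastic gradients `(1 ± δ) ∇f(x_t)` point in opposite directions, so
the two normalized steps are `x_t ∓ γ u` with `u = ±1`; the expected gradient norm is therefore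
symmetric in the sign of `u`, and the inequality is the triangle inequality
`|2 x_t| ≤ |x_t - γ| + |x_t + γ|`. -/

section NormalizedStep

variable {α : Type*} [Field α] [LinearOrder α] [IsStrictOrderedRing α]

theorem abs_div_abs_self {a : α} (ha : a ≠ 0) : |(a / |a|)| = 1 := by
  rw [abs_div, abs_abs, div_self (abs_ne_zero.mpr ha)]

theorem mul_div_abs_mul_of_pos {c : α} (hc : 0 < c) (a : α) : c * a / |c * a| = a / |a| := by
  rw [abs_mul, abs_of_pos hc, mul_div_mul_left _ _ hc.ne']

theorem mul_div_abs_mul_of_neg {c : α} (hc : c < 0) (a : α) : c * a / |c * a| = -(a / |a|) := by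
  rw [abs_mul, abs_of_neg hc, neg_mul, div_neg, mul_div_mul_left _ _ hc.ne]

theorem abs_sub_mul_add_abs_add_mul {u : α} (hu : |u| = 1) (x γ : α) :
    |x - γ * u| + |x + γ * u| = |x - γ| + |x + γ| := by
  rcases (abs_eq zero_le_one).mp hu with rfl | rfl
  · simp only [mul_one]
  · rw [mul_neg_one, sub_neg_eq_add, ← sub_eq_add_neg, add_comm]

theorem two_mul_abs_le_abs_sub_add_abs_add (x y : α) : 2 * |x| ≤ |x - y| + |x + y| := by
  calc 2 * |x| = |(x - y) + (x + y)| := by rw [← abs_two, ← abs_mul]; ring_nf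
    _ ≤ |x - y| + |x + y| := abs_add_le _ _

end NormalizedStep

theorem stmt_7_general (L γ δ xt : ℝ) (hL : 0 < L) (hδ : 1 < δ) (hxt : xt ≠ 0)
    (g₁ g₂ x₁' x₂' : ℝ)
    (hg₁ : g₁ = (1 + δ) * (L * xt)) (hg₂ : g₂ = (1 - δ) * (L * xt))
    (hx₁ : x₁' = xt - γ * (g₁ / |g₁|)) (hx₂ : x₂' = xt - γ * (g₂ / |g₂|)) :
    (1 / 2) * (L * |x₁'|) + (1 / 2) * (L * |x₂'|) = (L / 2) * (|xt - γ| + |xt + γ|) ∧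
      L * |xt| ≤ (L / 2) * (|xt - γ| + |xt + γ|) := by
  set u := L * xt / |L * xt|
  have hu : |u| = 1 := abs_div_abs_self (mul_ne_zero hL.ne' hxt)
  have hx₁u : x₁' = xt - γ * u := by
    rw [hx₁, hg₁, mul_div_abs_mul_of_pos (by linarith)]
  have hx₂u : x₂' = xt + γ * u := by
    rw [hx₂, hg₂, mul_div_abs_mul_of_neg (by linarith), mul_neg, sub_neg_eq_add]
  refine ⟨?_, ?_⟩
  · rw [hx₁u, hx₂u, ← abs_sub_mul_add_abs_add_mul hu]
    ring
  · nlinarith [two_mul_abs_le_abs_sub_add_abs_add xt γ]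

theorem stmt_7 (L γ δ xt : ℝ) (hL : 0 < L) (hγ : 0 < γ) (hδ : 1 < δ) (hxt : xt ≠ 0)
    (g₁ g₂ x₁' x₂' : ℝ)
    (hg₁ : g₁ = (1 + δ) * (L * xt)) (hg₂ : g₂ = (1 - δ) * (L * xt))
    (hx₁ : x₁' = xt - γ * (g₁ / |g₁|)) (hx₂ : x₂' = xt - γ * (g₂ / |g₂|)) :
    (1 / 2) * (L * |x₁'|) + (1 / 2) * (L * |x₂'|) = (L / 2) * (|xt - γ| + |xt + γ|) ∧
      L * |xt| ≤ (L / 2) * (|xt - γ| + |xt + γ|) :=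
  stmt_7_general L γ δ xt hL hδ hxt g₁ g₂ x₁' x₂' hg₁ hg₂ hx₁ hx₂
end

section
/- Let f : ℝᵈ → ℝ be ℓ-smooth with f(x_0) − inf f ≤ Δ. Run deterministic AMSGrad-norm without momentum: x_{t+1} = x_t − (γ_t/v̂_{t+1})∇f(x_t) with γ_t = γ/√(t+1) and v̂_{t+1} = max{v̂_t, ‖∇f(x_t)‖}, v̂_0 = v_0 > 0. If v_0 ≥ γℓ (so the effective stepsize never exceeds 1/ℓ, using that v̂ is nondecreasing), then (1/T)∑_{t=0}^{T−1}‖∇f(x_t)‖² ≤ (2Δ/(γ√T)) · max{v_0, √(2ℓΔ)}. -/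
/-!
With `v̂` nondecreasing and `v̂₀ = v₀ ≥ γℓ`, every effective stepsize `η_t = γ / (√(t+1) v̂_{t+1})`
is at most `1 / ℓ`, so each iteration is a gradient step satisfying the descent inequality
`f x_{t+1} ≤ f x_t - η_t / 2 ‖∇f x_t‖²`. Hence `f x_t - inf f ≤ Δ` for all `t`, which bounds every
gradient by `√(2ℓΔ)` and therefore `v̂` by `M = max v₀ √(2ℓΔ)`. For `t < T` this gives
`η_t ≥ γ / (√T M)`, and summing the descent inequalities telescopes to
`γ / (√T M) ∑_{t<T} ‖∇f x_t‖² ≤ 2Δ`.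
-/

open Finset
open scoped RealInnerProductSpace

variable {E : Type*} [NormedAddCommGroup E] [InnerProductSpace ℝ E] [CompleteSpace E]

theorem le_add_inner_gradient_add_sq {f : E → ℝ} {ℓ : ℝ} (hf : Differentiable ℝ f)
    (hlip : ∀ a b, ‖gradient f a - gradient f b‖ ≤ ℓ * ‖a - b‖) (x y : E) :
    f y ≤ f x + ⟪gradient f x, y - x⟫ + ℓ / 2 * ‖y - x‖ ^ 2 := by
  let p : ℝ → E := fun t => x + t • (y - x)
  -- `φ` is `f` minus its quadratic upper model along the segment; the Lipschitz bound makes it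
  -- antitone on `[0, 1]`, and `φ 1 ≤ φ 0` is the claim.
  let φ : ℝ → ℝ := fun t => f (p t) - t * ⟪gradient f x, y - x⟫ - ℓ / 2 * t ^ 2 * ‖y - x‖ ^ 2
  let φ' : ℝ → ℝ := fun t =>
    ⟪gradient f (p t), y - x⟫ - ⟪gradient f x, y - x⟫ - ℓ * t * ‖y - x‖ ^ 2
  have hφ : ∀ t, HasDerivAt φ (φ' t) t := by
    intro t
    have hp : HasDerivAt p (y - x) t :=
      (((hasDerivAt_id t).smul_const (y - x)).const_add x).congr_deriv (one_smul ℝ _)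
    have hfp : HasDerivAt (fun s => f (p s)) ⟪gradient f (p t), y - x⟫ t :=
      (hf (p t)).hasGradientAt.hasFDerivAt.comp_hasDerivAt t hp
    refine ((hfp.sub ((hasDerivAt_id t).mul_const ⟪gradient f x, y - x⟫)).sub
      (((hasDerivAt_pow 2 t).const_mul (ℓ / 2)).mul_const (‖y - x‖ ^ 2))).congr_deriv ?_
    simp only [φ', Nat.cast_ofNat]
    ring
  have hφ'_nonpos : ∀ t ∈ interior (Set.Icc (0 : ℝ) 1), φ' t ≤ 0 := by
    intro t ht
    rw [interior_Icc] at ht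
    have hpt : ‖p t - x‖ = t * ‖y - x‖ := by
      simp [p, norm_smul, abs_of_pos ht.1]
    have hinc : ⟪gradient f (p t), y - x⟫ - ⟪gradient f x, y - x⟫ ≤ ℓ * t * ‖y - x‖ ^ 2 :=
      calc ⟪gradient f (p t), y - x⟫ - ⟪gradient f x, y - x⟫
          = ⟪gradient f (p t) - gradient f x, y - x⟫ := (inner_sub_left ..).symm
        _ ≤ ‖gradient f (p t) - gradient f x‖ * ‖y - x‖ := real_inner_le_norm _ _
        _ ≤ ℓ * ‖p t - x‖ * ‖y - x‖ := by gcongr; exact hlip _ _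
        _ = ℓ * t * ‖y - x‖ ^ 2 := by rw [hpt]; ring
    simp only [φ']
    linarith
  have hanti : AntitoneOn φ (Set.Icc 0 1) :=
    antitoneOn_of_hasDerivWithinAt_nonpos (convex_Icc 0 1)
      (fun t _ => (hφ t).continuousAt.continuousWithinAt)
      (fun t _ => (hφ t).hasDerivWithinAt) hφ'_nonpos
  have h01 := hanti (by simp) (by simp) zero_le_one
  simp only [φ, p, zero_smul, one_smul, add_zero, add_sub_cancel, zero_mul, one_mul, one_pow,
    sub_zero, ne_eq, OfNat.ofNat_ne_zero, not_false_eq_true, zero_pow, mul_zero] at h01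
  linarith

theorem apply_sub_smul_gradient_le {f : E → ℝ} {ℓ η : ℝ} (hf : Differentiable ℝ f)
    (hlip : ∀ a b, ‖gradient f a - gradient f b‖ ≤ ℓ * ‖a - b‖) (hη : 0 ≤ η) (hℓη : ℓ * η ≤ 1)
    (x : E) : f (x - η • gradient f x) ≤ f x - η / 2 * ‖gradient f x‖ ^ 2 := by
  have h := le_add_inner_gradient_add_sq hf hlip x (x - η • gradient f x)
  rw [sub_sub_cancel_left, inner_neg_right, real_inner_smul_right, real_inner_self_eq_norm_sq,
    norm_neg, norm_smul, Real.norm_of_nonneg hη] at h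
  nlinarith [mul_nonneg (mul_nonneg hη (sq_nonneg ‖gradient f x‖)) (sub_nonneg.mpr hℓη)]

theorem norm_gradient_sq_le {f : E → ℝ} {ℓ : ℝ} (hℓ : 0 < ℓ) (hf : Differentiable ℝ f)
    (hlip : ∀ a b, ‖gradient f a - gradient f b‖ ≤ ℓ * ‖a - b‖) (hbdd : BddBelow (Set.range f))
    (x : E) : ‖gradient f x‖ ^ 2 ≤ 2 * ℓ * (f x - ⨅ y, f y) := by
  -- a gradient step of length `1 / ℓ` cannot go below the infimum
  have h := (ciInf_le hbdd _).trans
    (apply_sub_smul_gradient_le hf hlip (one_div_pos.mpr hℓ).le (mul_one_div_cancel hℓ.ne').le x)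
  rw [div_div, le_sub_comm, div_mul_eq_mul_div, one_mul, div_le_iff₀ (by positivity)] at h
  linarith

theorem apply_le_apply_zero_of_descent {f : E → ℝ} {x : ℕ → E} {η : ℕ → ℝ}
    (hdesc : ∀ t, f (x (t + 1)) ≤ f (x t) - η t / 2 * ‖gradient f (x t)‖ ^ 2)
    (hη : ∀ t, 0 ≤ η t) (t : ℕ) : f (x t) ≤ f (x 0) :=
  antitone_nat_of_succ_le (f := fun t => f (x t))
    (fun t => (hdesc t).trans (sub_le_self _ (by have := hη t; positivity))) t.zero_le

theorem norm_gradient_le_of_descent {f : E → ℝ} {x : ℕ → E} {η : ℕ → ℝ} {ℓ : ℝ} (hℓ : 0 < ℓ)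
    (hf : Differentiable ℝ f) (hlip : ∀ a b, ‖gradient f a - gradient f b‖ ≤ ℓ * ‖a - b‖)
    (hbdd : BddBelow (Set.range f))
    (hdesc : ∀ t, f (x (t + 1)) ≤ f (x t) - η t / 2 * ‖gradient f (x t)‖ ^ 2)
    (hη : ∀ t, 0 ≤ η t) (t : ℕ) :
    ‖gradient f (x t)‖ ≤ Real.sqrt (2 * ℓ * (f (x 0) - ⨅ y, f y)) := by
  have hsq : ‖gradient f (x t)‖ ^ 2 ≤ 2 * ℓ * (f (x 0) - ⨅ y, f y) :=
    (norm_gradient_sq_le hℓ hf hlip hbdd (x t)).trans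
      (by gcongr; exact apply_le_apply_zero_of_descent hdesc hη t)
  simpa using Real.abs_le_sqrt hsq

theorem mul_sum_norm_gradient_sq_le {f : E → ℝ} {x : ℕ → E} {η : ℕ → ℝ} {c : ℝ} {T : ℕ}
    (hbdd : BddBelow (Set.range f))
    (hdesc : ∀ t, f (x (t + 1)) ≤ f (x t) - η t / 2 * ‖gradient f (x t)‖ ^ 2)
    (hc : ∀ t < T, c ≤ η t) :
    c * ∑ t ∈ range T, ‖gradient f (x t)‖ ^ 2 ≤ 2 * (f (x 0) - ⨅ y, f y) := by
  have htel : ∑ t ∈ range T, η t / 2 * ‖gradient f (x t)‖ ^ 2 ≤ f (x 0) - f (x T) := by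
    rw [← sum_range_sub' (fun t => f (x t))]
    exact sum_le_sum fun t _ => by linarith [hdesc t]
  have hc' : c * ∑ t ∈ range T, ‖gradient f (x t)‖ ^ 2 ≤
      2 * ∑ t ∈ range T, η t / 2 * ‖gradient f (x t)‖ ^ 2 := by
    rw [mul_sum, mul_sum]
    refine sum_le_sum fun t ht => ?_
    have := hc t (mem_range.mp ht)
    nlinarith [sq_nonneg ‖gradient f (x t)‖]
  linarith [ciInf_le hbdd (x T)]

theorem le_max_of_eq_max_succ {v a : ℕ → ℝ} {B : ℝ} (hv : ∀ t, v (t + 1) = max (v t) (a t))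
    (ha : ∀ t, a t ≤ B) (t : ℕ) : v t ≤ max (v 0) B := by
  induction t with
  | zero => exact le_max_left _ _
  | succ t ih => rw [hv]; exact max_le ih ((ha t).trans (le_max_right _ _))

noncomputable def amsgradStepsize (γ : ℝ) (v : ℕ → ℝ) (t : ℕ) : ℝ :=
  γ / (Real.sqrt ((t : ℝ) + 1) * v (t + 1))

section amsgradStepsize

variable {γ : ℝ} {v : ℕ → ℝ}

theorem amsgradStepsize_nonneg (hγ : 0 ≤ γ) (hv : ∀ t, 0 ≤ v t) (t : ℕ) :
    0 ≤ amsgradStepsize γ v t :=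
  div_nonneg hγ (mul_nonneg (Real.sqrt_nonneg _) (hv _))

theorem mul_amsgradStepsize_le_one {ℓ : ℝ} (hv : ∀ t, 0 < v t) (hγℓ : ∀ t, γ * ℓ ≤ v t)
    (t : ℕ) : ℓ * amsgradStepsize γ v t ≤ 1 := by
  have hv1 : v (t + 1) ≤ Real.sqrt ((t : ℝ) + 1) * v (t + 1) :=
    le_mul_of_one_le_left (hv _).le (by simp)
  rw [amsgradStepsize, mul_div_assoc', div_le_one ((hv _).trans_le hv1)]
  linarith [hγℓ (t + 1)]

theorem div_le_amsgradStepsize {M : ℝ} {T t : ℕ} (hγ : 0 ≤ γ) (hv : ∀ t, 0 < v t)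
    (hM : ∀ t, v t ≤ M) (ht : t < T) : γ / (Real.sqrt T * M) ≤ amsgradStepsize γ v t := by
  have hsqrt : Real.sqrt ((t : ℝ) + 1) ≤ Real.sqrt T := Real.sqrt_le_sqrt (by exact_mod_cast ht)
  refine div_le_div_of_nonneg_left hγ (mul_pos (by positivity) (hv _)) ?_
  exact mul_le_mul hsqrt (hM _) (hv _).le (Real.sqrt_nonneg _)

end amsgradStepsize

theorem stmt_8_general {d : ℕ} (f : EuclideanSpace ℝ (Fin d) → ℝ) (ℓ γ v0 Δ fstar : ℝ)
    (hℓ : 0 < ℓ) (hγ : 0 < γ)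
    (hdiff : Differentiable ℝ f)
    (hlip : ∀ x y, ‖gradient f x - gradient f y‖ ≤ ℓ * ‖x - y‖)
    (hbdd : BddBelow (Set.range f)) (hstar : fstar = ⨅ x, f x)
    (x : ℕ → EuclideanSpace ℝ (Fin d)) (v : ℕ → ℝ)
    (hΔ : f (x 0) - fstar ≤ Δ)
    (hv : v 0 = v0) (hvrec : ∀ t, v (t + 1) = max (v t) ‖gradient f (x t)‖)
    (hupd : ∀ t : ℕ,
      x (t + 1) = x t - (γ / (Real.sqrt ((t : ℝ) + 1) * v (t + 1))) • gradient f (x t))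
    (hbig : γ * ℓ ≤ v0) (T : ℕ) (hT : 0 < T) :
    (1 / (T : ℝ)) * ∑ t ∈ Finset.range T, ‖gradient f (x t)‖ ^ 2 ≤
      (2 * Δ / (γ * Real.sqrt T)) * max v0 (Real.sqrt (2 * ℓ * Δ)) := by
  subst hstar hv
  set M := max (v 0) (Real.sqrt (2 * ℓ * Δ))
  have hv_ge : ∀ t, v 0 ≤ v t := fun t =>
    monotone_nat_of_le_succ (fun t => (hvrec t).ge.trans' (le_max_left _ _)) t.zero_le
  have hv_pos : ∀ t, 0 < v t := fun t => ((mul_pos hγ hℓ).trans_le hbig).trans_le (hv_ge t)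
  have hη : ∀ t, 0 ≤ amsgradStepsize γ v t := amsgradStepsize_nonneg hγ.le fun t => (hv_pos t).le
  have hdesc (t : ℕ) :
      f (x (t + 1)) ≤ f (x t) - amsgradStepsize γ v t / 2 * ‖gradient f (x t)‖ ^ 2 := by
    rw [hupd]
    exact apply_sub_smul_gradient_le hdiff hlip (hη t)
      (mul_amsgradStepsize_le_one hv_pos (fun t => hbig.trans (hv_ge t)) t) (x t)
  have hgrad (t : ℕ) : ‖gradient f (x t)‖ ≤ Real.sqrt (2 * ℓ * Δ) :=
    (norm_gradient_le_of_descent hℓ hdiff hlip hbdd hdesc hη t).trans (by gcongr)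
  have hc : 0 < γ / (Real.sqrt T * M) := by
    have := (hv_pos 0).trans_le (le_max_left _ (Real.sqrt (2 * ℓ * Δ))); positivity
  have hsum : γ / (Real.sqrt T * M) * ∑ t ∈ range T, ‖gradient f (x t)‖ ^ 2 ≤ 2 * Δ :=
    (mul_sum_norm_gradient_sq_le hbdd hdesc fun t =>
      div_le_amsgradStepsize hγ.le hv_pos (le_max_of_eq_max_succ hvrec hgrad)).trans
      (by linarith)
  calc 1 / (T : ℝ) * ∑ t ∈ range T, ‖gradient f (x t)‖ ^ 2
      ≤ 1 / T * (2 * Δ / (γ / (Real.sqrt T * M))) := by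
        gcongr; exact (le_div_iff₀' hc).mpr hsum
    _ = 2 * Δ / (γ * Real.sqrt T) * M := by
        field_simp
        rw [Real.sq_sqrt T.cast_nonneg]
        ring

theorem stmt_8 {d : ℕ} (f : EuclideanSpace ℝ (Fin d) → ℝ) (ℓ γ v0 Δ fstar : ℝ)
    (hℓ : 0 < ℓ) (hγ : 0 < γ) (hv0 : 0 < v0)
    (hdiff : Differentiable ℝ f)
    (hlip : ∀ x y, ‖gradient f x - gradient f y‖ ≤ ℓ * ‖x - y‖)
    (hbdd : BddBelow (Set.range f)) (hstar : fstar = ⨅ x, f x)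
    (x : ℕ → EuclideanSpace ℝ (Fin d)) (v : ℕ → ℝ)
    (hΔ : f (x 0) - fstar ≤ Δ)
    (hv : v 0 = v0) (hvrec : ∀ t, v (t + 1) = max (v t) ‖gradient f (x t)‖)
    (hupd : ∀ t : ℕ,
      x (t + 1) = x t - (γ / (Real.sqrt ((t : ℝ) + 1) * v (t + 1))) • gradient f (x t))
    (hbig : γ * ℓ ≤ v0) (T : ℕ) (hT : 0 < T) :
    (1 / (T : ℝ)) * ∑ t ∈ Finset.range T, ‖gradient f (x t)‖ ^ 2 ≤
      (2 * Δ / (γ * Real.sqrt T)) * max v0 (Real.sqrt (2 * ℓ * Δ)) :=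
  stmt_8_general f ℓ γ v0 Δ fstar hℓ hγ hdiff hlip hbdd hstar x v hΔ hv hvrec hupd hbig T hT
end

section
/- Let f : ℝᵈ → ℝ be ℓ-smooth and consider deterministic AMSGrad-norm without momentum with γ_t = γ/(t+1)^α, 0 < α < 1, v̂_{t+1} = max{v̂_t, ‖∇f(x_t)‖}, v̂_0 = v_0 > 0 and update x_{t+1} = x_t − (γ_t/v̂_{t+1})∇f(x_t). Let τ be the first iteration with effective stepsize γ_τ/v̂_{τ+1} ≤ 1/ℓ, and suppose τ ≥ 1. Then τ < (ℓγ/v_0)^{1/α} and ∑_{t=0}^{τ−1}‖∇f(x_t)‖² ≤ (ℓγ/v_0)^{1/α} · γ²ℓ². -/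
/-!
Before `τ` every effective stepsize exceeds `1/ℓ`, i.e. `(t+1)^α v̂_{t+1} < ℓγ`. As `v̂` is
nondecreasing from `v₀` and dominates the gradient norms, this gives `‖∇f(x_t)‖ ≤ ℓγ` for `t < τ`,
and at `t = τ - 1` it gives `τ^α v₀ < ℓγ`, i.e. `τ < (ℓγ/v₀)^{1/α}`.
-/

open Finset Real

lemma monotone_of_eq_max_succ {v g : ℕ → ℝ} (hv : ∀ t, v (t + 1) = max (v t) (g t)) :
    Monotone v :=
  monotone_nat_of_le_succ fun t => (hv t).symm ▸ le_max_left _ _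

lemma lt_mul_of_one_div_lt_div {ℓ γ p : ℝ} (hℓ : 0 < ℓ) (hp : 0 < p) (h : 1 / ℓ < γ / p) :
    p < ℓ * γ := by
  rwa [div_lt_div_iff₀ hℓ hp, one_mul, mul_comm] at h

lemma lt_rpow_one_div_of_rpow_mul_lt {s α w c : ℝ} (hs : 0 ≤ s) (hα : 0 < α) (hw : 0 < w)
    (h : s ^ α * w < c) : s < (c / w) ^ (1 / α) := by
  have hc : 0 ≤ c := (mul_nonneg (rpow_nonneg hs α) hw.le).trans h.le
  rwa [one_div, lt_rpow_inv_iff_of_pos hs (div_nonneg hc hw.le) hα, lt_div_iff₀ hw]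

theorem stmt_9_general {d : ℕ} (f : EuclideanSpace ℝ (Fin d) → ℝ) (ℓ γ v0 α : ℝ)
    (hℓ : 0 < ℓ) (hv0 : 0 < v0) (hα1 : 0 < α)
    (x : ℕ → EuclideanSpace ℝ (Fin d)) (v : ℕ → ℝ)
    (hv : v 0 = v0) (hvrec : ∀ t, v (t + 1) = max (v t) ‖gradient f (x t)‖)
    (τ : ℕ) (hτ1 : 1 ≤ τ)
    (hτbefore : ∀ t < τ, 1 / ℓ < γ / (((t : ℝ) + 1) ^ α * v (t + 1))) :
    (τ : ℝ) < (ℓ * γ / v0) ^ (1 / α) ∧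
      ∑ t ∈ Finset.range τ, ‖gradient f (x t)‖ ^ 2 ≤
        (ℓ * γ / v0) ^ (1 / α) * (γ ^ 2 * ℓ ^ 2) := by
  have hv0_le : ∀ t, v0 ≤ v t := fun t => hv ▸ monotone_of_eq_max_succ hvrec (Nat.zero_le t)
  have hbefore : ∀ t < τ, ((t : ℝ) + 1) ^ α * v (t + 1) < ℓ * γ := fun t ht =>
    lt_mul_of_one_div_lt_div hℓ (by have := hv0.trans_le (hv0_le (t + 1)); positivity)
      (hτbefore t ht)
  have hgrad : ∀ t < τ, ‖gradient f (x t)‖ ≤ ℓ * γ := fun t ht =>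
    calc ‖gradient f (x t)‖ ≤ v (t + 1) := hvrec t ▸ le_max_right _ _
      _ ≤ ((t : ℝ) + 1) ^ α * v (t + 1) :=
          le_mul_of_one_le_left (hv0.le.trans (hv0_le _))
            (one_le_rpow (by linarith [t.cast_nonneg (α := ℝ)]) hα1.le)
      _ ≤ ℓ * γ := (hbefore t ht).le
  have hτ : (τ : ℝ) < (ℓ * γ / v0) ^ (1 / α) := by
    obtain ⟨s, rfl⟩ := Nat.exists_eq_add_of_le' hτ1
    refine lt_rpow_one_div_of_rpow_mul_lt (by positivity) hα1 hv0 ?_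
    calc ((s + 1 : ℕ) : ℝ) ^ α * v0 ≤ ((s : ℝ) + 1) ^ α * v (s + 1) := by
          push_cast; gcongr; exact hv0_le _
      _ < ℓ * γ := hbefore s s.lt_add_one
  refine ⟨hτ, ?_⟩
  calc ∑ t ∈ range τ, ‖gradient f (x t)‖ ^ 2 ≤ τ * (γ ^ 2 * ℓ ^ 2) := by
        simpa using sum_le_card_nsmul (range τ) _ (γ ^ 2 * ℓ ^ 2) fun t ht => by
          rw [← mul_pow, mul_comm γ]
          exact pow_le_pow_left₀ (norm_nonneg _) (hgrad t (mem_range.mp ht)) 2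
    _ ≤ (ℓ * γ / v0) ^ (1 / α) * (γ ^ 2 * ℓ ^ 2) := by gcongr

theorem stmt_9 {d : ℕ} (f : EuclideanSpace ℝ (Fin d) → ℝ) (ℓ γ v0 α : ℝ)
    (hℓ : 0 < ℓ) (hγ : 0 < γ) (hv0 : 0 < v0) (hα1 : 0 < α) (hα2 : α < 1)
    (hdiff : Differentiable ℝ f)
    (hlip : ∀ x y, ‖gradient f x - gradient f y‖ ≤ ℓ * ‖x - y‖)
    (x : ℕ → EuclideanSpace ℝ (Fin d)) (v : ℕ → ℝ)
    (hv : v 0 = v0) (hvrec : ∀ t, v (t + 1) = max (v t) ‖gradient f (x t)‖)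
    (hupd : ∀ t : ℕ,
      x (t + 1) = x t - (γ / (((t : ℝ) + 1) ^ α * v (t + 1))) • gradient f (x t))
    (τ : ℕ) (hτ1 : 1 ≤ τ)
    (hτfirst : γ / (((τ : ℝ) + 1) ^ α * v (τ + 1)) ≤ 1 / ℓ)
    (hτbefore : ∀ t < τ, 1 / ℓ < γ / (((t : ℝ) + 1) ^ α * v (t + 1))) :
    (τ : ℝ) < (ℓ * γ / v0) ^ (1 / α) ∧
      ∑ t ∈ Finset.range τ, ‖gradient f (x t)‖ ^ 2 ≤
        (ℓ * γ / v0) ^ (1 / α) * (γ ^ 2 * ℓ ^ 2) :=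
  stmt_9_general f ℓ γ v0 α hℓ hv0 hα1 x v hv hvrec τ hτ1 hτbefore
end

section
/- Consider the one-dimensional quadratic F(x) = x²/(4c) with c = max{1/ℓ, ∑_{t=0}^{T−1} η̃_t}, and run gradient descent with momentum: m_{t+1} = β₁ m_t + (1−β₁)F'(x_t), x_{t+1} = x_t − η_t m_{t+1}, with m_0 ≤ 0, 0 ≤ β₁ < 1, 0 < η_t ≤ η̃_t, starting from x_0 = √(Δc). Then for all 0 ≤ t ≤ T−1, |F'(x_t)| ≥ √(Δ/(16c)); in particular F(x_0) − inf F ≤ Δ and min_{0≤t≤T−1}|F'(x_t)| ≥ √(Δ / (16 max{1/ℓ, ∑_{t<T} η̃_t})). -/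
/-!
Since `F'` is monotone, every momentum term is at most `F'` of the running maximum `M_t` of
the iterates, so the iterate can fall below `M_t` by at most
`(∑_{s<t} η̃_s) · F'(M_t) = (∑_{s<t} η̃_s) · M_t / (2c) ≤ M_t / 2`.
Hence `x_t ≥ M_t / 2 ≥ x_0 / 2` and `|F'(x_t)| ≥ x_0 / (4c) = √(Δ / (16c))`.
-/

open Finset

namespace MomentumSGD

variable {g : ℝ → ℝ} {β : ℝ} {m x η ηtil : ℕ → ℝ}

theorem momentum_succ_le (hg : Monotone g) (hβ : 0 ≤ β) (hβ' : β ≤ 1)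
    (hm : ∀ t, m (t + 1) = β * m t + (1 - β) * g (x t)) {t : ℕ}
    (ht : m t ≤ g (partialSups x t)) : m (t + 1) ≤ g (partialSups x t) := by
  have hxt : g (x t) ≤ g (partialSups x t) := hg (le_partialSups x t)
  rw [hm t]
  nlinarith

theorem momentum_le (hg : Monotone g) (hβ : 0 ≤ β) (hβ' : β ≤ 1) (hm0 : m 0 ≤ g (x 0))
    (hm : ∀ t, m (t + 1) = β * m t + (1 - β) * g (x t)) (t : ℕ) :
    m t ≤ g (partialSups x t) := by
  induction t with
  | zero => simpa using hm0
  | succ t ih =>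
    exact (momentum_succ_le hg hβ hβ' hm ih).trans (hg ((partialSups x).monotone t.le_succ))

theorem partialSups_sub_le (hg : Monotone g) (hg0 : 0 ≤ g (x 0)) (hβ : 0 ≤ β) (hβ' : β ≤ 1)
    (hm0 : m 0 ≤ g (x 0)) (hm : ∀ t, m (t + 1) = β * m t + (1 - β) * g (x t))
    (hη : ∀ t, 0 ≤ η t) (hηle : ∀ t, η t ≤ ηtil t)
    (hx : ∀ t, x (t + 1) = x t - η t * m (t + 1)) (t : ℕ) :
    partialSups x t - x t ≤ (∑ s ∈ range t, ηtil s) * g (partialSups x t) := by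
  induction t with
  | zero => simp
  | succ t ih =>
    set M := partialSups x
    have hS : 0 ≤ ∑ s ∈ range (t + 1), ηtil s :=
      sum_nonneg fun s _ => (hη s).trans (hηle s)
    have hgM : 0 ≤ g (M t) := hg0.trans (hg (le_partialSups_of_le x t.zero_le))
    have hmom : m (t + 1) ≤ g (M t) :=
      momentum_succ_le hg hβ hβ' hm (momentum_le hg hβ hβ' hm0 hm t)
    have hstep : η t * m (t + 1) ≤ ηtil t * g (M t) :=
      (mul_le_mul_of_nonneg_left hmom (hη t)).trans (mul_le_mul_of_nonneg_right (hηle t) hgM)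
    have hMsucc : M (t + 1) = max (M t) (x (t + 1)) := partialSups_succ x t
    calc M (t + 1) - x (t + 1) = max (M t - x (t + 1)) 0 := by
          rw [hMsucc, ← max_sub_sub_right, sub_self]
      _ ≤ (∑ s ∈ range (t + 1), ηtil s) * g (M t) := by
        refine max_le ?_ (mul_nonneg hS hgM)
        rw [sum_range_succ, hx t]
        linarith
      _ ≤ (∑ s ∈ range (t + 1), ηtil s) * g (M (t + 1)) :=
        mul_le_mul_of_nonneg_left (hg ((partialSups x).monotone t.le_succ)) hS

theorem half_initial_le_of_linear {k : ℝ} (hk : 0 ≤ k) (hx0 : 0 ≤ x 0) (hβ : 0 ≤ β)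
    (hβ' : β ≤ 1) (hm0 : m 0 ≤ k * x 0) (hm : ∀ t, m (t + 1) = β * m t + (1 - β) * (k * x t))
    (hη : ∀ t, 0 ≤ η t) (hηle : ∀ t, η t ≤ ηtil t)
    (hx : ∀ t, x (t + 1) = x t - η t * m (t + 1)) {t : ℕ}
    (ht : (∑ s ∈ range t, ηtil s) * k ≤ 1 / 2) : x 0 / 2 ≤ x t := by
  have hgap := partialSups_sub_le (g := fun y => k * y) (monotone_id.const_mul hk)
    (mul_nonneg hk hx0) hβ hβ' hm0 hm hη hηle hx t
  have hM : x 0 ≤ partialSups x t := le_partialSups_of_le x t.zero_le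
  nlinarith

end MomentumSGD

theorem stmt_10 (ℓ Δ β₁ c : ℝ) (hℓ : 0 < ℓ) (hΔ : 0 < Δ)
    (hβ₁ : 0 ≤ β₁) (hβ₁' : β₁ < 1) (T : ℕ)
    (ηtil η : ℕ → ℝ) (hη : ∀ t, 0 < η t) (hηle : ∀ t, η t ≤ ηtil t)
    (hc : c = max (1 / ℓ) (∑ t ∈ Finset.range T, ηtil t))
    (F : ℝ → ℝ) (hF : F = fun x => x ^ 2 / (4 * c))
    (m x : ℕ → ℝ) (hm0 : m 0 ≤ 0)
    (hx0 : x 0 = Real.sqrt (Δ * c))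
    (hm : ∀ t, m (t + 1) = β₁ * m t + (1 - β₁) * deriv F (x t))
    (hx : ∀ t, x (t + 1) = x t - η t * m (t + 1)) :
    (F (x 0) - ⨅ y, F y ≤ Δ) ∧
      ∀ t < T, Real.sqrt (Δ / (16 * c)) ≤ |deriv F (x t)| := by
  have hc0 : 0 < c := hc ▸ lt_max_of_lt_left (by positivity)
  have hF' : ∀ y, deriv F y = (2 * c)⁻¹ * y := fun y => by
    simp only [hF, deriv_div_const, deriv_pow_field]
    norm_num
    ring
  have hx0_nonneg : 0 ≤ x 0 := hx0 ▸ Real.sqrt_nonneg _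
  constructor
  · have hFx0 : F (x 0) = Δ / 4 := by
      rw [hF, hx0]
      dsimp only
      rw [Real.sq_sqrt (by positivity)]
      field_simp
    have hinf : 0 ≤ ⨅ y, F y := le_ciInf fun y => by rw [hF]; positivity
    linarith
  · intro t ht
    have hsum : (∑ s ∈ range t, ηtil s) * (2 * c)⁻¹ ≤ 1 / 2 := by
      have hST : ∑ s ∈ range t, ηtil s ≤ c := hc ▸ le_max_of_le_right
        (sum_le_sum_of_subset_of_nonneg (range_subset_range.mpr ht.le)
          fun s _ _ => (hη s).le.trans (hηle s))
      rw [← div_eq_mul_inv, div_le_iff₀ (by positivity)]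
      linarith
    have hxt : x 0 / 2 ≤ x t := MomentumSGD.half_initial_le_of_linear (by positivity)
      hx0_nonneg hβ₁ hβ₁'.le (hm0.trans (by positivity)) (by simpa only [hF'] using hm)
      (fun t => (hη t).le) hηle hx hsum
    have hsqrt : Real.sqrt (Δ / (16 * c)) = (2 * c)⁻¹ * (x 0 / 2) := by
      rw [hx0, Real.sqrt_eq_iff_mul_self_eq (by positivity) (by positivity)]
      field_simp
      rw [Real.sq_sqrt (by positivity)]
      ring
    have hxt_nonneg : 0 ≤ x t := (div_nonneg hx0_nonneg two_pos.le).trans hxt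
    rw [hsqrt, hF', abs_of_nonneg (by positivity)]
    gcongr
end

section
/- Let f : ℝᵈ → ℝ be ℓ-smooth, let g_t be a gradient estimate, and define e_t = g_t − ∇f(x_t). If x_{t+1} = x_t − (γ_t/‖g_t‖) g_t with γ_t > 0 and g_t ≠ 0, then f(x_{t+1}) − f(x_t) ≤ −(γ_t/3)‖∇f(x_t)‖ + (8γ_t/3)‖e_t‖ + ℓγ_t²/2. -/
/-!
Smoothness bounds `f (x + v)` by its first-order expansion plus `ℓ ‖v‖² / 2`, since
`t ↦ f (x + t v) - t ⟪∇f x, v⟫ - ℓ ‖v‖² t² / 2` has nonpositive derivative for `t ≥ 0`.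
For the normalized step `v = -γ g / ‖g‖` we have `‖v‖ ≤ γ`, and with `e = g - ∇f x`,
Cauchy–Schwarz and the triangle inequality give `⟪∇f x, g⟫ / ‖g‖ ≥ ‖g‖ - ‖e‖ ≥ ‖∇f x‖ - 2 ‖e‖`.
So the step changes `f` by at most `-γ ‖∇f x‖ + 2 γ ‖e‖ + ℓ γ² / 2`, without any case split on
the size of `e`.
-/

open InnerProductSpace RealInnerProductSpace

variable {E : Type*} [NormedAddCommGroup E] [InnerProductSpace ℝ E]

theorem norm_sub_two_mul_norm_sub_le_inner_div_norm (a g : E) :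
    ‖a‖ - 2 * ‖g - a‖ ≤ ⟪a, g⟫ / ‖g‖ := by
  rcases eq_or_ne g 0 with rfl | hg
  · simpa using le_mul_of_one_le_left (norm_nonneg a) one_le_two
  have hinner : ‖g‖ * (‖g‖ - ‖g - a‖) ≤ ⟪a, g⟫ := by
    have := real_inner_le_norm (g - a) g
    rw [inner_sub_left, real_inner_self_eq_norm_sq] at this
    linarith
  have htri : ‖a‖ ≤ ‖g‖ + ‖g - a‖ := by simpa using norm_sub_le g (g - a)
  rw [le_div_iff₀ (norm_pos_iff.2 hg)]
  calc (‖a‖ - 2 * ‖g - a‖) * ‖g‖ ≤ ‖g‖ * (‖g‖ - ‖g - a‖) := by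
        rw [mul_comm]; exact mul_le_mul_of_nonneg_left (by linarith) (norm_nonneg g)
    _ ≤ ⟪a, g⟫ := hinner

theorem norm_div_norm_smul_le {γ : ℝ} (hγ : 0 ≤ γ) (g : E) : ‖(γ / ‖g‖) • g‖ ≤ γ := by
  rw [norm_smul, Real.norm_of_nonneg (by positivity)]
  rcases eq_or_ne ‖g‖ 0 with hg | hg
  · simpa [hg] using hγ
  · rw [div_mul_cancel₀ γ hg]

variable [CompleteSpace E]

theorem hasDerivAt_comp_add_smul_of_differentiableAt {f : E → ℝ} {x v : E} {t : ℝ}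
    (hf : DifferentiableAt ℝ f (x + t • v)) :
    HasDerivAt (fun s : ℝ => f (x + s • v)) ⟪gradient f (x + t • v), v⟫ t := by
  have hline : HasDerivAt (fun s : ℝ => x + s • v) v t := by
    simpa using ((hasDerivAt_id t).smul_const v).const_add x
  have := (hasGradientAt_iff_hasFDerivAt.1 hf.hasGradientAt).comp_hasDerivAt t hline
  simp only [toDual_apply_apply] at this
  exact this

theorem image_add_le_of_gradient_lipschitz {f : E → ℝ} {ℓ : ℝ} (hf : Differentiable ℝ f)
    (hlip : ∀ x y, ‖gradient f x - gradient f y‖ ≤ ℓ * ‖x - y‖) (x v : E) :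
    f (x + v) ≤ f x + ⟪gradient f x, v⟫ + ℓ / 2 * ‖v‖ ^ 2 := by
  set φ : ℝ → ℝ := fun t => f (x + t • v) - t * ⟪gradient f x, v⟫ - ℓ / 2 * ‖v‖ ^ 2 * t ^ 2
  have hφ : ∀ t : ℝ, HasDerivAt φ
      (⟪gradient f (x + t • v) - gradient f x, v⟫ - ℓ * ‖v‖ ^ 2 * t) t := by
    intro t
    have := ((hasDerivAt_comp_add_smul_of_differentiableAt (x := x) (v := v) (hf _)).sub
      ((hasDerivAt_id t).mul_const ⟪gradient f x, v⟫)).sub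
      ((hasDerivAt_pow 2 t).const_mul (ℓ / 2 * ‖v‖ ^ 2))
    exact this.congr_deriv (by simp only [inner_sub_left]; ring)
  have hderiv_nonpos : ∀ t, 0 ≤ t →
      ⟪gradient f (x + t • v) - gradient f x, v⟫ - ℓ * ‖v‖ ^ 2 * t ≤ 0 := by
    intro t ht
    have hstep : ‖x + t • v - x‖ = t * ‖v‖ := by
      rw [add_sub_cancel_left, norm_smul, Real.norm_of_nonneg ht]
    calc ⟪gradient f (x + t • v) - gradient f x, v⟫ - ℓ * ‖v‖ ^ 2 * t
        ≤ ‖gradient f (x + t • v) - gradient f x‖ * ‖v‖ - ℓ * ‖v‖ ^ 2 * t := by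
          gcongr; exact real_inner_le_norm _ _
      _ ≤ ℓ * (t * ‖v‖) * ‖v‖ - ℓ * ‖v‖ ^ 2 * t := by
          gcongr; exact hstep ▸ hlip _ _
      _ = 0 := by ring
  have hanti : AntitoneOn φ (Set.Ici 0) :=
    antitoneOn_of_hasDerivWithinAt_nonpos (convex_Ici 0)
      (fun t _ => (hφ t).continuousAt.continuousWithinAt)
      (fun t _ => (hφ t).hasDerivWithinAt)
      (fun t ht => hderiv_nonpos t (interior_subset ht))
  have h01 := hanti Set.self_mem_Ici (zero_le_one' ℝ) zero_le_one
  simp only [φ, zero_smul, add_zero, one_smul, zero_mul, one_mul, sub_zero, one_pow,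
    ne_eq, OfNat.ofNat_ne_zero, not_false_eq_true, zero_pow, mul_zero] at h01
  linarith

theorem image_normalized_step_sub_le {f : E → ℝ} {ℓ γ : ℝ} (hℓ : 0 ≤ ℓ) (hγ : 0 ≤ γ)
    (hf : Differentiable ℝ f) (hlip : ∀ x y, ‖gradient f x - gradient f y‖ ≤ ℓ * ‖x - y‖)
    (x g : E) :
    f (x - (γ / ‖g‖) • g) - f x
      ≤ -γ * ‖gradient f x‖ + 2 * γ * ‖g - gradient f x‖ + ℓ * γ ^ 2 / 2 := by
  have hdescent := image_add_le_of_gradient_lipschitz hf hlip x (-((γ / ‖g‖) • g))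
  rw [← sub_eq_add_neg] at hdescent
  have hinner : ⟪gradient f x, -((γ / ‖g‖) • g)⟫
      ≤ -γ * ‖gradient f x‖ + 2 * γ * ‖g - gradient f x‖ := by
    rw [inner_neg_right, real_inner_smul_right, div_mul_eq_mul_div, mul_div_assoc]
    have := mul_le_mul_of_nonneg_left
      (norm_sub_two_mul_norm_sub_le_inner_div_norm (gradient f x) g) hγ
    linarith
  have hquadratic : ℓ / 2 * ‖-((γ / ‖g‖) • g)‖ ^ 2 ≤ ℓ * γ ^ 2 / 2 := by
    calc ℓ / 2 * ‖-((γ / ‖g‖) • g)‖ ^ 2 ≤ ℓ / 2 * γ ^ 2 := by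
          rw [norm_neg]; gcongr; exact norm_div_norm_smul_le hγ g
      _ = ℓ * γ ^ 2 / 2 := by ring
  linarith

theorem stmt_17_general {d : ℕ} (f : EuclideanSpace ℝ (Fin d) → ℝ) (ℓ γ : ℝ)
    (hℓ : 0 < ℓ) (hγ : 0 < γ) (hdiff : Differentiable ℝ f)
    (hlip : ∀ x y, ‖gradient f x - gradient f y‖ ≤ ℓ * ‖x - y‖)
    (x g e : EuclideanSpace ℝ (Fin d))
    (he : e = g - gradient f x)
    (y : EuclideanSpace ℝ (Fin d)) (hy : y = x - (γ / ‖g‖) • g) :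
    f y - f x ≤ -(γ / 3) * ‖gradient f x‖ + (8 * γ / 3) * ‖e‖ + ℓ * γ ^ 2 / 2 := by
  subst he hy
  have := image_normalized_step_sub_le hℓ.le hγ.le hdiff hlip x g
  linarith [mul_nonneg hγ.le (norm_nonneg (gradient f x)),
    mul_nonneg hγ.le (norm_nonneg (g - gradient f x))]

theorem stmt_17 {d : ℕ} (f : EuclideanSpace ℝ (Fin d) → ℝ) (ℓ γ : ℝ)
    (hℓ : 0 < ℓ) (hγ : 0 < γ) (hdiff : Differentiable ℝ f)
    (hlip : ∀ x y, ‖gradient f x - gradient f y‖ ≤ ℓ * ‖x - y‖)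
    (x g e : EuclideanSpace ℝ (Fin d)) (hg : g ≠ 0)
    (he : e = g - gradient f x)
    (y : EuclideanSpace ℝ (Fin d)) (hy : y = x - (γ / ‖g‖) • g) :
    f y - f x ≤ -(γ / 3) * ‖gradient f x‖ + (8 * γ / 3) * ‖e‖ + ℓ * γ ^ 2 / 2 :=
  stmt_17_general f ℓ γ hℓ hγ hdiff hlip x g e he y hy
end

section
/- Consider deterministic normalized gradient descent on an ℓ-smooth function f with f(x_0) − inf f ≤ Δ: x_{t+1} = x_t − (γ_t/‖∇f(x_t)‖)∇f(x_t) with γ_t = γ/√(t+1) (and x_{t+1} = x_t if ∇f(x_t) = 0). Then (1/T)∑_{t=0}^{T−1}‖∇f(x_t)‖ ≤ 3(Δ/γ + ℓγ log T) T^{−1/2} for T ≥ 2. -/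
/-!
By the descent lemma, a normalized step of length `η_t = γ / √(t + 1)` decreases `f` by at least
`η_t ‖∇f(x_t)‖ - ℓ η_t² / 2`. Telescoping, with `η_t ≥ γ / √T` and
`∑ η_t² = γ² H_T ≤ γ² (1 + log T)`, gives `(γ / √T) ∑ ‖∇f(x_t)‖ ≤ Δ + ℓ γ² (1 + log T) / 2`;
for `T ≥ 2` the constant term is absorbed through `1 ≤ 5 log T`.
-/

open Finset

section Smooth

variable {E : Type*} [NormedAddCommGroup E] [InnerProductSpace ℝ E] [CompleteSpace E]
  {f : E → ℝ} {ℓ : ℝ}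

theorem le_add_inner_gradient_add_of_lipschitz_gradient (hdiff : Differentiable ℝ f)
    (hlip : ∀ x y, ‖gradient f x - gradient f y‖ ≤ ℓ * ‖x - y‖) (x v : E) :
    f (x + v) ≤ f x + inner ℝ (gradient f x) v + ℓ / 2 * ‖v‖ ^ 2 := by
  set φ : ℝ → ℝ := fun t => f (x + t • v) - t * inner ℝ (gradient f x) v - ℓ / 2 * ‖v‖ ^ 2 * t ^ 2
  set φ' : ℝ → ℝ := fun t =>
    inner ℝ (gradient f (x + t • v)) v - inner ℝ (gradient f x) v - ℓ * ‖v‖ ^ 2 * t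
  have hφ : ∀ t, HasDerivAt φ (φ' t) t := by
    intro t
    have hline : HasDerivAt (fun s : ℝ => x + s • v) v t := by
      simpa using ((hasDerivAt_id t).smul_const v).const_add x
    have hf := (hdiff (x + t • v)).hasGradientAt.hasFDerivAt.comp_hasDerivAt t hline
    refine ((hf.sub ((hasDerivAt_id t).mul_const (inner ℝ (gradient f x) v))).sub
      ((hasDerivAt_pow 2 t).const_mul (ℓ / 2 * ‖v‖ ^ 2))).congr_deriv ?_
    simp only [φ', InnerProductSpace.toDual_apply_apply]
    ring
  have hφ'_nonpos : ∀ t, 0 ≤ t → φ' t ≤ 0 := by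
    intro t ht
    have hgrad : ‖gradient f (x + t • v) - gradient f x‖ ≤ ℓ * (t * ‖v‖) := by
      simpa [norm_smul, abs_of_nonneg ht] using hlip (x + t • v) x
    have := real_inner_le_norm (gradient f (x + t • v) - gradient f x) v
    rw [inner_sub_left] at this
    nlinarith [mul_le_mul_of_nonneg_right hgrad (norm_nonneg v)]
  have hanti : AntitoneOn φ (Set.Icc 0 1) :=
    antitoneOn_of_hasDerivWithinAt_nonpos (convex_Icc 0 1)
      (fun t _ => (hφ t).continuousAt.continuousWithinAt)
      (fun t _ => (hφ t).hasDerivWithinAt)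
      (fun t ht => hφ'_nonpos t (interior_subset ht).1)
  have := hanti (by norm_num) (by norm_num) zero_le_one
  simp only [φ, one_smul, zero_smul, add_zero, one_mul, one_pow, zero_mul, sub_zero, mul_one,
    ne_eq, OfNat.ofNat_ne_zero, not_false_eq_true, zero_pow] at this
  linarith

theorem le_of_normalized_gradient_step [DecidableEq E] (hℓ : 0 ≤ ℓ) (hdiff : Differentiable ℝ f)
    (hlip : ∀ x y, ‖gradient f x - gradient f y‖ ≤ ℓ * ‖x - y‖) (x : E) (η : ℝ) :
    f (if gradient f x = 0 then x else x - (η / ‖gradient f x‖) • gradient f x) ≤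
      f x - η * ‖gradient f x‖ + ℓ / 2 * η ^ 2 := by
  split_ifs with hg
  · rw [hg, norm_zero]
    nlinarith [sq_nonneg η]
  · have hgn : ‖gradient f x‖ ≠ 0 := norm_ne_zero_iff.2 hg
    have := le_add_inner_gradient_add_of_lipschitz_gradient hdiff hlip x
      (-(η / ‖gradient f x‖) • gradient f x)
    rw [neg_smul, ← sub_eq_add_neg, inner_neg_right, real_inner_smul_right,
      real_inner_self_eq_norm_sq, norm_neg, norm_smul, Real.norm_eq_abs, abs_div, abs_norm] at this
    have hinner : η / ‖gradient f x‖ * ‖gradient f x‖ ^ 2 = η * ‖gradient f x‖ := by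
      field_simp
    have hnorm : (|η| / ‖gradient f x‖ * ‖gradient f x‖) ^ 2 = η ^ 2 := by
      rw [div_mul_cancel₀ _ hgn, sq_abs]
    rw [hinner, hnorm] at this
    linarith

end Smooth

theorem Finset.sum_range_le_sub_add_of_le_sub_add {α : Type*} [AddCommGroup α] [PartialOrder α]
    [IsOrderedAddMonoid α] {a b c : ℕ → α} (h : ∀ t, a (t + 1) ≤ a t - b t + c t) (n : ℕ) :
    ∑ t ∈ range n, b t ≤ a 0 - a n + ∑ t ∈ range n, c t := by
  rw [← sum_range_sub' a n, ← sum_add_distrib]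
  refine sum_le_sum fun t _ => ?_
  calc b t = a t - (a t - b t + c t) + c t := by abel
    _ ≤ a t - a (t + 1) + c t := by gcongr; exact h t

theorem sum_sq_div_sqrt_succ_le (γ : ℝ) (n : ℕ) :
    ∑ t ∈ range n, (γ / √((t : ℝ) + 1)) ^ 2 ≤ γ ^ 2 * (1 + Real.log n) := by
  have hsum : ∑ t ∈ range n, (γ / √((t : ℝ) + 1)) ^ 2 = γ ^ 2 * harmonic n := by
    simp only [harmonic, Rat.cast_sum, Rat.cast_inv, mul_sum, div_pow]
    refine sum_congr rfl fun t _ => ?_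
    rw [Real.sq_sqrt (by positivity), div_eq_mul_inv]
    push_cast
    rfl
  rw [hsum]
  gcongr
  exact harmonic_le_one_add_log n

theorem div_sqrt_mul_sum_le_sum_div_sqrt_succ_mul {γ : ℝ} (hγ : 0 ≤ γ) {a : ℕ → ℝ}
    (ha : ∀ t, 0 ≤ a t) (n : ℕ) :
    γ / √(n : ℝ) * ∑ t ∈ range n, a t ≤ ∑ t ∈ range n, γ / √((t : ℝ) + 1) * a t := by
  rw [mul_sum]
  refine sum_le_sum fun t ht => ?_
  have : (t : ℝ) + 1 ≤ n := by exact_mod_cast mem_range.1 ht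
  have := ha t
  gcongr

theorem stmt_18 {d : ℕ} (f : EuclideanSpace ℝ (Fin d) → ℝ) (ℓ γ Δ fstar : ℝ)
    (hℓ : 0 < ℓ) (hγ : 0 < γ) (hdiff : Differentiable ℝ f)
    (hlip : ∀ x y, ‖gradient f x - gradient f y‖ ≤ ℓ * ‖x - y‖)
    (hbdd : BddBelow (Set.range f)) (hstar : fstar = ⨅ x, f x)
    (x : ℕ → EuclideanSpace ℝ (Fin d)) (hΔ : f (x 0) - fstar ≤ Δ)
    (hupd : ∀ t : ℕ,
      x (t + 1) = if gradient f (x t) = 0 then x t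
        else x t - (γ / (Real.sqrt ((t : ℝ) + 1) * ‖gradient f (x t)‖)) • gradient f (x t))
    (T : ℕ) (hT : 2 ≤ T) :
    (1 / (T : ℝ)) * ∑ t ∈ Finset.range T, ‖gradient f (x t)‖ ≤
      3 * (Δ / γ + ℓ * γ * Real.log T) / Real.sqrt T := by
  set η : ℕ → ℝ := fun t => γ / √((t : ℝ) + 1)
  set S := ∑ t ∈ range T, ‖gradient f (x t)‖
  have hstep : ∀ t, f (x (t + 1)) ≤ f (x t) - η t * ‖gradient f (x t)‖ + ℓ / 2 * η t ^ 2 := by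
    intro t
    rw [hupd t, ← div_div]
    exact le_of_normalized_gradient_step hℓ.le hdiff hlip (x t) (η t)
  have hgap : f (x 0) - f (x T) ≤ Δ := by
    linarith [hstar ▸ ciInf_le hbdd (x T)]
  have hΔ0 : 0 ≤ Δ := by linarith [hstar ▸ ciInf_le hbdd (x 0)]
  have hη : γ / √T * S ≤ ∑ t ∈ range T, η t * ‖gradient f (x t)‖ :=
    div_sqrt_mul_sum_le_sum_div_sqrt_succ_mul hγ.le (fun t => norm_nonneg _) T
  have htele := sum_range_le_sub_add_of_le_sub_add (a := fun t => f (x t)) hstep T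
  have hsq : ∑ t ∈ range T, ℓ / 2 * η t ^ 2 ≤ ℓ / 2 * (γ ^ 2 * (1 + Real.log T)) := by
    rw [← mul_sum]
    gcongr
    exact sum_sq_div_sqrt_succ_le γ T
  have hlog : 1 ≤ 5 * Real.log T := by
    have : Real.log 2 ≤ Real.log T := Real.log_le_log two_pos (by exact_mod_cast hT)
    linarith [Real.log_two_gt_d9]
  have hT0 : (0 : ℝ) < T := by positivity
  calc 1 / (T : ℝ) * S = (γ / √T * S) / (γ * √T) := by
        field_simp
        rw [Real.sq_sqrt hT0.le, mul_comm]
    _ ≤ (Δ + ℓ / 2 * (γ ^ 2 * (1 + Real.log T))) / (γ * √T) := by gcongr; linarith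
    _ = (Δ / γ + ℓ * γ * (1 + Real.log T) / 2) / √T := by field_simp
    _ ≤ 3 * (Δ / γ + ℓ * γ * Real.log T) / √T := by
      gcongr
      have : 0 ≤ Δ / γ := by positivity
      nlinarith [mul_pos hℓ hγ]
end

section
/- Let v̂ be defined recursively by v̂_0 = v_0 > 0 and v̂_{t+1} = max{v̂_t, ‖∇f(x_t)‖} along iterates of deterministic AMSGrad-norm without momentum on an ℓ-smooth f with stepsize γ_t = γ/√(t+1): x_{t+1} = x_t − (γ_t/v̂_{t+1})∇f(x_t). If τ is the first index with γ_τ/v̂_{τ+1} ≤ 1/ℓ and τ ≥ 1, then f(x_τ) − f(x_0) ≤ (ℓγ²/2)(1 + log τ) ≤ (ℓγ²/2)(1 + log(ℓγ/v_0)²). -/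
/-!
Smoothness gives the descent inequality `f (x + u) ≤ f x + ⟪∇f x, u⟫ + ℓ/2 ‖u‖²`. Along the
iteration `‖∇f(x_t)‖ ≤ v̂_{t+1}`, so the step `x_t → x_{t+1}` moves by at most `γ/√(t+1)` and
raises `f` by at most `ℓγ²/(2(t+1))`; summing gives the harmonic number `H_τ ≤ 1 + log τ`.
Since the step at `t = τ - 1` is still larger than `1/ℓ` and `v̂_τ ≥ v₀`, `√τ < ℓγ/v₀`.
-/

open Finset

section Smooth

variable {E : Type*} [NormedAddCommGroup E] [InnerProductSpace ℝ E] [CompleteSpace E]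
  {f : E → ℝ} {ℓ : ℝ}

theorem image_add_le_of_lipschitz_gradient (hf : Differentiable ℝ f)
    (hlip : ∀ x y, ‖gradient f x - gradient f y‖ ≤ ℓ * ‖x - y‖) (x u : E) :
    f (x + u) ≤ f x + inner ℝ (gradient f x) u + ℓ / 2 * ‖u‖ ^ 2 := by
  set h : ℝ → ℝ := fun t ↦ f (x + t • u) - t * inner ℝ (gradient f x) u - ℓ / 2 * ‖u‖ ^ 2 * t ^ 2
  have hderiv (t : ℝ) : HasDerivAt h
      (inner ℝ (gradient f (x + t • u)) u - inner ℝ (gradient f x) u - ℓ * ‖u‖ ^ 2 * t) t := by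
    have hline : HasDerivAt (fun t : ℝ ↦ x + t • u) u t := by
      simpa using ((hasDerivAt_id t).smul_const u).const_add x
    have hcomp := ((hf _).hasGradientAt.hasFDerivAt).comp_hasDerivAt t hline
    refine ((hcomp.sub ((hasDerivAt_id t).mul_const _)).sub
      ((hasDerivAt_pow 2 t).const_mul (ℓ / 2 * ‖u‖ ^ 2))).congr_deriv ?_
    simp only [InnerProductSpace.toDual_apply_apply, one_mul]
    ring
  have hderiv_le (t : ℝ) (ht : 0 < t) :
      inner ℝ (gradient f (x + t • u)) u - inner ℝ (gradient f x) u ≤ ℓ * ‖u‖ ^ 2 * t := by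
    have hgrad : ‖gradient f (x + t • u) - gradient f x‖ ≤ ℓ * (t * ‖u‖) := by
      simpa [norm_smul, abs_of_pos ht] using hlip (x + t • u) x
    calc inner ℝ (gradient f (x + t • u)) u - inner ℝ (gradient f x) u
        = inner ℝ (gradient f (x + t • u) - gradient f x) u := (inner_sub_left ..).symm
      _ ≤ ‖gradient f (x + t • u) - gradient f x‖ * ‖u‖ := real_inner_le_norm _ _
      _ ≤ ℓ * (t * ‖u‖) * ‖u‖ := by gcongr
      _ = ℓ * ‖u‖ ^ 2 * t := by ring
  have hanti : AntitoneOn h (Set.Ici 0) :=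
    antitoneOn_of_hasDerivWithinAt_nonpos (convex_Ici 0)
      (fun t _ ↦ (hderiv t).continuousAt.continuousWithinAt)
      (fun t _ ↦ (hderiv t).hasDerivWithinAt)
      (fun t ht ↦ sub_nonpos.2 (hderiv_le t (by simpa using ht)))
  have := hanti Set.self_mem_Ici (show (1 : ℝ) ∈ Set.Ici 0 by norm_num) zero_le_one
  simp only [h, one_smul, zero_smul, add_zero] at this
  linarith

theorem image_sub_smul_gradient_le (hf : Differentiable ℝ f)
    (hlip : ∀ x y, ‖gradient f x - gradient f y‖ ≤ ℓ * ‖x - y‖) (x : E) {η : ℝ} (hη : 0 ≤ η) :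
    f (x - η • gradient f x) ≤ f x + ℓ / 2 * (η * ‖gradient f x‖) ^ 2 := by
  have h := image_add_le_of_lipschitz_gradient hf hlip x (-(η • gradient f x))
  rw [← sub_eq_add_neg, inner_neg_right, real_inner_smul_right, real_inner_self_eq_norm_sq,
    norm_neg, norm_smul, Real.norm_of_nonneg hη] at h
  nlinarith [sq_nonneg ‖gradient f x‖]

theorem image_sub_normalized_gradient_step_le (hℓ : 0 ≤ ℓ) (hf : Differentiable ℝ f)
    (hlip : ∀ x y, ‖gradient f x - gradient f y‖ ≤ ℓ * ‖x - y‖) (x : E) {γ s v : ℝ}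
    (hγ : 0 ≤ γ) (hs : 0 ≤ s) (hv : ‖gradient f x‖ ≤ v) :
    f (x - (γ / (Real.sqrt s * v)) • gradient f x) ≤ f x + ℓ * γ ^ 2 / 2 / s := by
  have hv₀ : 0 ≤ v := (norm_nonneg _).trans hv
  have hstep : γ / (Real.sqrt s * v) * ‖gradient f x‖ ≤ γ / Real.sqrt s := by
    rw [← div_div, div_mul_eq_mul_div, mul_div_assoc]
    exact mul_le_of_le_one_right (by positivity) (div_le_one_of_le₀ hv hv₀)
  calc f (x - (γ / (Real.sqrt s * v)) • gradient f x)
      ≤ f x + ℓ / 2 * (γ / (Real.sqrt s * v) * ‖gradient f x‖) ^ 2 :=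
        image_sub_smul_gradient_le hf hlip x (by positivity)
    _ ≤ f x + ℓ / 2 * (γ / Real.sqrt s) ^ 2 := by gcongr
    _ = f x + ℓ * γ ^ 2 / 2 / s := by rw [div_pow, Real.sq_sqrt hs]; ring

end Smooth

theorem sub_le_mul_one_add_log_of_le_add_div {a : ℕ → ℝ} {c : ℝ} (hc : 0 ≤ c)
    (h : ∀ t : ℕ, a (t + 1) ≤ a t + c / ((t : ℝ) + 1)) (n : ℕ) :
    a n - a 0 ≤ c * (1 + Real.log n) :=
  calc a n - a 0 = ∑ t ∈ range n, (a (t + 1) - a t) := (sum_range_sub a n).symm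
    _ ≤ ∑ t ∈ range n, c / ((t : ℝ) + 1) := sum_le_sum fun t _ ↦ by linarith [h t]
    _ = c * harmonic n := by simp [harmonic, mul_sum, div_eq_mul_inv]
    _ ≤ c * (1 + Real.log n) := by gcongr; exact harmonic_le_one_add_log n

theorem le_sq_of_inv_lt_div_sqrt_mul {ℓ γ s v₀ v : ℝ} (hℓ : 0 < ℓ) (hv₀ : 0 < v₀) (hv : v₀ ≤ v)
    (hs : 0 < s) (h : 1 / ℓ < γ / (Real.sqrt s * v)) : s ≤ (ℓ * γ / v₀) ^ 2 := by
  rw [lt_div_iff₀ (mul_pos (Real.sqrt_pos.2 hs) (hv₀.trans_le hv)), one_div_mul_eq_div,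
    div_lt_iff₀ hℓ] at h
  have hsqrt : Real.sqrt s < ℓ * γ / v₀ := by
    rw [lt_div_iff₀ hv₀]
    nlinarith [Real.sqrt_pos.2 hs]
  exact ((Real.sqrt_lt' (by linarith [Real.sqrt_nonneg s])).1 hsqrt).le

theorem stmt_19_general {d : ℕ} (f : EuclideanSpace ℝ (Fin d) → ℝ) (ℓ γ v0 : ℝ)
    (hℓ : 0 < ℓ) (hγ : 0 < γ) (hv0 : 0 < v0)
    (hdiff : Differentiable ℝ f)
    (hlip : ∀ x y, ‖gradient f x - gradient f y‖ ≤ ℓ * ‖x - y‖)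
    (x : ℕ → EuclideanSpace ℝ (Fin d)) (v : ℕ → ℝ)
    (hv : v 0 = v0) (hvrec : ∀ t, v (t + 1) = max (v t) ‖gradient f (x t)‖)
    (hupd : ∀ t : ℕ,
      x (t + 1) = x t - (γ / (Real.sqrt ((t : ℝ) + 1) * v (t + 1))) • gradient f (x t))
    (τ : ℕ) (hτ1 : 1 ≤ τ)
    (hτbefore : ∀ t < τ, 1 / ℓ < γ / (Real.sqrt ((t : ℝ) + 1) * v (t + 1))) :
    f (x τ) - f (x 0) ≤ (ℓ * γ ^ 2 / 2) * (1 + Real.log τ) ∧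
      (ℓ * γ ^ 2 / 2) * (1 + Real.log τ) ≤
        (ℓ * γ ^ 2 / 2) * (1 + Real.log ((ℓ * γ / v0) ^ 2)) := by
  have hv_mono : Monotone v := monotone_nat_of_le_succ fun t ↦ hvrec t ▸ le_max_left _ _
  have hdescent (t : ℕ) : f (x (t + 1)) ≤ f (x t) + ℓ * γ ^ 2 / 2 / ((t : ℝ) + 1) := by
    rw [hupd t]
    exact image_sub_normalized_gradient_step_le hℓ.le hdiff hlip (x t) hγ.le (by positivity)
      (hvrec t ▸ le_max_right _ _)
  refine ⟨sub_le_mul_one_add_log_of_le_add_div (a := f ∘ x) (by positivity) hdescent τ, ?_⟩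
  have hτ : (τ : ℝ) ≤ (ℓ * γ / v0) ^ 2 := by
    have h := hτbefore (τ - 1) (by omega)
    rw [Nat.cast_pred hτ1, sub_add_cancel, Nat.sub_add_cancel hτ1] at h
    exact le_sq_of_inv_lt_div_sqrt_mul hℓ hv0 (hv ▸ hv_mono (Nat.zero_le τ)) (by positivity) h
  gcongr

theorem stmt_19 {d : ℕ} (f : EuclideanSpace ℝ (Fin d) → ℝ) (ℓ γ v0 : ℝ)
    (hℓ : 0 < ℓ) (hγ : 0 < γ) (hv0 : 0 < v0)
    (hdiff : Differentiable ℝ f)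
    (hlip : ∀ x y, ‖gradient f x - gradient f y‖ ≤ ℓ * ‖x - y‖)
    (x : ℕ → EuclideanSpace ℝ (Fin d)) (v : ℕ → ℝ)
    (hv : v 0 = v0) (hvrec : ∀ t, v (t + 1) = max (v t) ‖gradient f (x t)‖)
    (hupd : ∀ t : ℕ,
      x (t + 1) = x t - (γ / (Real.sqrt ((t : ℝ) + 1) * v (t + 1))) • gradient f (x t))
    (τ : ℕ) (hτ1 : 1 ≤ τ)
    (hτfirst : γ / (Real.sqrt ((τ : ℝ) + 1) * v (τ + 1)) ≤ 1 / ℓ)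
    (hτbefore : ∀ t < τ, 1 / ℓ < γ / (Real.sqrt ((t : ℝ) + 1) * v (t + 1))) :
    f (x τ) - f (x 0) ≤ (ℓ * γ ^ 2 / 2) * (1 + Real.log τ) ∧
      (ℓ * γ ^ 2 / 2) * (1 + Real.log τ) ≤
        (ℓ * γ ^ 2 / 2) * (1 + Real.log ((ℓ * γ / v0) ^ 2)) :=
  stmt_19_general f ℓ γ v0 hℓ hγ hv0 hdiff hlip x v hv hvrec hupd τ hτ1 hτbefore
end
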